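/- For all integers n, m ≥ 1, the product of the total groves of degrees n and m is the total grove of degree nm: Y_n × Y_m = Y_{nm}, where the total grove of degree n is the whole set Y_n regarded as a grove. -/

import Mathlib

/-!
Left and right sums add degrees as long as no leaf is involved, so every tree in `x × Y_m`
has degree `deg x · m`. Conversely, every tree of degree `a + b` lies in some interval `x + y`
with `deg x = a`, `deg y = b`. Writing a tree `tˡ ∨ tʳ` of degree `nm` with
`i = ⌊deg tˡ / m⌋` and `n = i + j + 1`, this puts it in `(Y_{im} ⊢ Y_m) ⊣ Y_{jm}`, which by
induction on `n` is contained in `((Y_i × Y_m) ⊢ Y_m) ⊣ (Y_j × Y_m) ⊆ Y_n × Y_m`.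
-/

/-- A planar binary tree: a leaf `|` or a grafting `x ∨ y`. -/
inductive PBT : Type
  | leaf : PBT
  | node : PBT → PBT → PBT
  deriving DecidableEq

namespace PBT

/-- The degree: number of internal vertices. -/
def deg : PBT → ℕ
  | leaf => 0
  | node l r => deg l + deg r + 1

/-- The set `Y n` of planar binary trees of degree `n`. -/
def Y (n : ℕ) : Set PBT := {t | t.deg = n}

/-- The `over` operation `x / y`. -/
def overOp : PBT → PBT → PBT
  | x, leaf => x
  | x, node yl yr => node (overOp x yl) yr

/-- The `under` operation `x \ y`. -/
def under : PBT → PBT → PBT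
  | leaf, y => y
  | node xl xr, y => node xl (under xr y)

/-- The Tamari order, generated by `(x ∨ y) ∨ z ≤ x ∨ (y ∨ z)` and compatibility
with grafting on both sides. -/
inductive tle : PBT → PBT → Prop
  | refl (x : PBT) : tle x x
  | trans {x y z : PBT} : tle x y → tle y z → tle x z
  | rotate (x y z : PBT) : tle (node (node x y) z) (node x (node y z))
  | node_left {x y : PBT} (z : PBT) : tle x y → tle (node x z) (node y z)
  | node_right {x y : PBT} (z : PBT) : tle x y → tle (node z x) (node z y)

/-- The sum of two planar binary trees: the Tamari interval `[x/y, x\y]`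
(a subset of `Y (deg x + deg y)`). -/
def sum (x y : PBT) : Set PBT := {z | tle (overOp x y) z ∧ tle z (under x y)}

/-- A grove of degree `n`: a nonempty subset of `Y n`. -/
def Grove (n : ℕ) (A : Set PBT) : Prop := A.Nonempty ∧ ∀ x ∈ A, x.deg = n

/-- The sum of groves. -/
def gsum (A B : Set PBT) : Set PBT := ⋃ x ∈ A, ⋃ y ∈ B, sum x y

/-- The reflection involution σ. -/
def σ : PBT → PBT
  | leaf => leaf
  | node l r => node (σ r) (σ l)

/-- The left sum `x ⊣ y` of trees (with the conventions `x ⊣ | = {x}`, `| ⊣ y = {|}`). -/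
def lsum : PBT → PBT → Set PBT
  | x, leaf => {x}
  | leaf, _ => {leaf}
  | node xl xr, y => (fun z => node xl z) '' sum xr y

/-- The right sum `x ⊢ y` of trees (with the conventions `| ⊢ y = {y}`, `x ⊢ | = {|}`). -/
def rsum : PBT → PBT → Set PBT
  | leaf, y => {y}
  | _, leaf => {leaf}
  | x, node yl yr => (fun z => node z yr) '' sum x yl

/-- Left sum of groves. -/
def glsum (A B : Set PBT) : Set PBT := ⋃ x ∈ A, ⋃ y ∈ B, lsum x y

/-- Right sum of groves. -/
def grsum (A B : Set PBT) : Set PBT := ⋃ x ∈ A, ⋃ y ∈ B, rsum x y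

/-- Multiplication of a tree by a grove:
`| × B = {|}` and `(xˡ ∨ xʳ) × B = ((xˡ × B) ⊢ B) ⊣ (xʳ × B)`.
(The conventions `{|} ⊢ B = B` and `A ⊣ {|} = A` are built into `rsum`/`lsum`.) -/
def tmul : PBT → Set PBT → Set PBT
  | leaf, _ => {leaf}
  | node l r, B => glsum (grsum (tmul l B) B) (tmul r B)

/-- Multiplication of groves. -/
def gmul (A B : Set PBT) : Set PBT := ⋃ x ∈ A, tmul x B

@[simp] lemma mem_Y {t : PBT} {n : ℕ} : t ∈ Y n ↔ t.deg = n := Iff.rfl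

lemma deg_overOp (x y : PBT) : (overOp x y).deg = x.deg + y.deg := by
  induction y with
  | leaf => rfl
  | node yl yr ihl _ => simp only [overOp, deg, ihl]; omega

lemma tle.deg_eq {x y : PBT} (h : tle x y) : x.deg = y.deg := by
  induction h <;> (try simp only [deg]) <;> omega

lemma deg_of_mem_sum {x y z : PBT} (h : z ∈ sum x y) : z.deg = x.deg + y.deg := by
  rw [← h.1.deg_eq, deg_overOp]

lemma tle_node_under (x u v : PBT) : tle (node (under x u) v) (under x (node u v)) := by
  induction x with
  | leaf => exact tle.refl _
  | node a b _ ihb => exact (tle.rotate a (under b u) v).trans (tle.node_right a ihb)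

lemma tle_overOp_node (u v w : PBT) : tle (overOp (node u v) w) (node u (overOp v w)) := by
  induction w with
  | leaf => exact tle.refl _
  | node wl wr ihl _ => exact (tle.node_left wr ihl).trans (tle.rotate u (overOp v wl) wr)

lemma exists_mem_sum (t : PBT) (a b : ℕ) (h : t.deg = a + b) :
    ∃ x ∈ Y a, ∃ y ∈ Y b, t ∈ sum x y := by
  induction t generalizing a b with
  | leaf =>
    obtain ⟨rfl, rfl⟩ : a = 0 ∧ b = 0 := by simp only [deg] at h; omega
    exact ⟨leaf, rfl, leaf, rfl, tle.refl _, tle.refl _⟩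
  | node tl tr ihl ihr =>
    simp only [deg] at h
    by_cases htr : tr.deg < b
    · obtain ⟨x, hx, yl, hyl, h₁, h₂⟩ := ihl a (b - 1 - tr.deg) (by omega)
      refine ⟨x, hx, node yl tr, ?_, tle.node_left tr h₁,
        (tle.node_left tr h₂).trans (tle_node_under x yl tr)⟩
      simp only [mem_Y, deg] at hyl ⊢
      omega
    · obtain ⟨xr, hxr, y, hy, h₁, h₂⟩ := ihr (tr.deg - b) b (by omega)
      refine ⟨node tl xr, ?_, y, hy, (tle_overOp_node tl xr y).trans (tle.node_right tl h₁),
        tle.node_right tl h₂⟩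
      simp only [mem_Y, deg] at hxr ⊢
      omega

lemma deg_of_mem_rsum {x y z : PBT} (hy : y ≠ leaf) (hz : z ∈ rsum x y) :
    z.deg = x.deg + y.deg := by
  obtain ⟨yl, yr, rfl⟩ : ∃ yl yr, y = node yl yr := by cases y <;> simp_all
  cases x with
  | leaf => simp_all [rsum, deg]
  | node xl xr =>
    obtain ⟨s, hs, rfl⟩ := hz
    have := deg_of_mem_sum hs
    simp only [deg] at this ⊢
    omega

lemma deg_of_mem_lsum {x y z : PBT} (hx : x ≠ leaf) (hz : z ∈ lsum x y) :
    z.deg = x.deg + y.deg := by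
  obtain ⟨xl, xr, rfl⟩ : ∃ xl xr, x = node xl xr := by cases x <;> simp_all
  cases y with
  | leaf => simp_all [lsum, deg]
  | node yl yr =>
    obtain ⟨s, hs, rfl⟩ := hz
    have := deg_of_mem_sum hs
    simp only [deg] at this ⊢
    omega

lemma tmul_subset_Y {m : ℕ} (hm : 1 ≤ m) {B : Set PBT} (hB : B ⊆ Y m) (x : PBT) :
    tmul x B ⊆ Y (x.deg * m) := by
  induction x with
  | leaf => simp [tmul, deg]
  | node l r ihl ihr =>
    intro z hz
    simp only [tmul, glsum, grsum, Set.mem_iUnion] at hz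
    obtain ⟨w, ⟨u, hu, y, hy, hw⟩, v, hv, hz⟩ := hz
    have hy' : y.deg = m := hB hy
    have hw' : w.deg = l.deg * m + m := by
      rw [deg_of_mem_rsum (by rintro rfl; simp [deg] at hy'; omega) hw, ihl hu, hy']
    rw [mem_Y, deg_of_mem_lsum (by rintro rfl; simp [deg] at hw'; omega) hz, hw', ihr hv, deg]
    ring

lemma gmul_subset_Y {n m : ℕ} (hm : 1 ≤ m) {A B : Set PBT} (hA : A ⊆ Y n) (hB : B ⊆ Y m) :
    gmul A B ⊆ Y (n * m) := by
  simp only [gmul, Set.iUnion_subset_iff]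
  intro x hx
  rw [← hA hx]
  exact tmul_subset_Y hm hB x

lemma glsum_mono {A A' B B' : Set PBT} (hA : A ⊆ A') (hB : B ⊆ B') : glsum A B ⊆ glsum A' B' :=
  Set.biUnion_mono hA fun _ _ => Set.biUnion_mono hB fun _ _ => subset_rfl

lemma grsum_mono {A A' B B' : Set PBT} (hA : A ⊆ A') (hB : B ⊆ B') : grsum A B ⊆ grsum A' B' :=
  Set.biUnion_mono hA fun _ _ => Set.biUnion_mono hB fun _ _ => subset_rfl

lemma glsum_grsum_gmul_subset (i j : ℕ) (B : Set PBT) :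
    glsum (grsum (gmul (Y i) B) B) (gmul (Y j) B) ⊆ gmul (Y (i + j + 1)) B := by
  intro z hz
  simp only [glsum, grsum, gmul, Set.mem_iUnion] at hz ⊢
  obtain ⟨w, ⟨u, ⟨xl, hxl, hu⟩, y, hy, hw⟩, v, ⟨xr, hxr, hv⟩, hz⟩ := hz
  refine ⟨node xl xr, by simp only [mem_Y, deg] at hxl hxr ⊢; omega, ?_⟩
  simp only [tmul, glsum, grsum, Set.mem_iUnion]
  exact ⟨w, ⟨u, hu, y, hy, hw⟩, v, hv, hz⟩

lemma exists_node_mem_rsum {tl : PBT} {a : ℕ} (ha : a ≤ tl.deg) (yr : PBT) :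
    ∃ u ∈ Y a, ∃ yl ∈ Y (tl.deg - a), node tl yr ∈ rsum u (node yl yr) := by
  obtain rfl | ha₀ := Nat.eq_zero_or_pos a
  · exact ⟨leaf, rfl, tl, rfl, rfl⟩
  obtain ⟨u, hu, yl, hyl, hs⟩ := exists_mem_sum tl a (tl.deg - a) (by omega)
  obtain ⟨ul, ur, rfl⟩ : ∃ ul ur, u = node ul ur := by cases u <;> simp_all [deg]
  exact ⟨node ul ur, hu, yl, hyl, tl, hs, rfl⟩

lemma exists_node_mem_lsum {tr : PBT} {c : ℕ} (hc : c ≤ tr.deg) (tl : PBT) :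
    ∃ wr ∈ Y (tr.deg - c), ∃ v ∈ Y c, node tl tr ∈ lsum (node tl wr) v := by
  obtain rfl | hc₀ := Nat.eq_zero_or_pos c
  · exact ⟨tr, rfl, leaf, rfl, rfl⟩
  obtain ⟨wr, hwr, v, hv, hs⟩ := exists_mem_sum tr (tr.deg - c) c (by omega)
  obtain ⟨vl, vr, rfl⟩ : ∃ vl vr, v = node vl vr := by cases v <;> simp_all [deg]
  exact ⟨wr, hwr, node vl vr, hv, tr, hs, rfl⟩

lemma node_mem_glsum_grsum {tl tr : PBT} {a b c : ℕ} (ha : a ≤ tl.deg) (hc : c ≤ tr.deg)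
    (h : tl.deg + tr.deg + 1 = a + b + c) :
    node tl tr ∈ glsum (grsum (Y a) (Y b)) (Y c) := by
  obtain ⟨wr, hwr, v, hv, hl⟩ := exists_node_mem_lsum hc tl
  obtain ⟨u, hu, yl, hyl, hr⟩ := exists_node_mem_rsum ha wr
  have hy : node yl wr ∈ Y b := by simp only [mem_Y, deg] at hwr hyl ⊢; omega
  simp only [glsum, grsum, Set.mem_iUnion]
  exact ⟨node tl wr, ⟨u, hu, node yl wr, hy, hr⟩, v, hv, hl⟩

lemma Y_mul_subset_gmul {m : ℕ} (hm : 1 ≤ m) (n : ℕ) : Y (n * m) ⊆ gmul (Y n) (Y m) := by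
  induction n using Nat.strong_induction_on with
  | _ n ih =>
    rintro (_ | ⟨tl, tr⟩) ht
    · obtain rfl : n = 0 := by simp_all [deg]; omega
      simp only [gmul, Set.mem_iUnion]
      exact ⟨leaf, rfl, rfl⟩
    obtain ⟨i, hil, hiu⟩ : ∃ i, i * m ≤ tl.deg ∧ tl.deg < i * m + m :=
      ⟨tl.deg / m, Nat.div_mul_le_self _ _, Nat.lt_div_mul_add hm⟩
    have hin : i < n := by
      have : i * m < n * m := by simp only [mem_Y, deg] at ht; omega
      exact Nat.lt_of_mul_lt_mul_right this
    obtain ⟨j, rfl⟩ : ∃ j, n = i + j + 1 := ⟨n - i - 1, by omega⟩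
    have hnm : (i + j + 1) * m = i * m + m + j * m := by ring
    have ht' : tl.deg + tr.deg + 1 = i * m + m + j * m := by simpa [deg, hnm] using ht
    have hsplit := node_mem_glsum_grsum hil (by omega) ht'
    exact glsum_grsum_gmul_subset i j (Y m) <|
      glsum_mono (grsum_mono (ih i hin) subset_rfl) (ih j (by omega)) hsplit

end PBT

open PBT in
theorem total_grove_mul_general (n m : ℕ) (hm : 1 ≤ m) :
    gmul (Y n) (Y m) = Y (n * m) :=
  (gmul_subset_Y hm subset_rfl subset_rfl).antisymm (Y_mul_subset_gmul hm n)

open PBT in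
/-- `Y_n × Y_m = Y_{nm}` for `n, m ≥ 1`. -/
theorem total_grove_mul (n m : ℕ) (hn : 1 ≤ n) (hm : 1 ≤ m) :
    gmul (Y n) (Y m) = Y (n * m) :=
  total_grove_mul_general n m hm
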